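/- Let c ≥ 18, let G be a finite connected simple graph with minimum degree at least c and with |V(G)| ≥ c + 2, and let ρ be a rotation system on G. Then the genus of (G,ρ) is strictly greater than ⌈(c−2)(c−3)/12⌉. In particular, no such graph has an embedding of genus γ(K_{c+1}). -/

import Mathlib

/-!
In an embedding of a graph of minimum degree at least 2 every face has length at least 3: the
face permutation `ρ ∘ rev` has no fixed point because `G` is loopless, and a face of length 2
would force `ρ` to fix a dart, i.e. a vertex of degree 1. Hence `3 |F| ≤ 2 |E|`, and with
`c |V| ≤ 2 |E|` Euler's formula gives `12 (g - 1) ≥ |V| (c - 6) ≥ (c + 2)(c - 6)`, which is at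
least `(c - 2)(c - 3)` exactly when `c ≥ 18`.
-/

namespace DualSep

open SimpleGraph

variable {V : Type*} [Fintype V] [DecidableEq V]

/-- The dart-reversal permutation of a simple graph. -/
def dartRev (G : SimpleGraph V) : Equiv.Perm G.Dart :=
  Function.Involutive.toPerm SimpleGraph.Dart.symm SimpleGraph.Dart.symm_involutive

/-- `ρ` is a rotation system on `G`: it permutes the darts, preserves the initial vertex of
each dart, and the darts leaving any fixed vertex form a single orbit. -/
structure IsRotationSystem (G : SimpleGraph V) (ρ : Equiv.Perm G.Dart) : Prop where
  fst_fixed : ∀ d : G.Dart, (ρ d).fst = d.fst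
  single_orbit : ∀ d d' : G.Dart, d.fst = d'.fst → ∃ n : ℕ, (ρ ^ n) d = d'

/-- The face permutation `φ = ρ ∘ rev` of a rotation system. -/
def facePerm {G : SimpleGraph V} (ρ : Equiv.Perm G.Dart) : Equiv.Perm G.Dart :=
  ρ * dartRev G

/-- The face (orbit of the face permutation) containing a given dart. -/
def faceOf {G : SimpleGraph V} (ρ : Equiv.Perm G.Dart) (d : G.Dart) : Set G.Dart :=
  {d' | (facePerm ρ).SameCycle d d'}

/-- The set of faces of `(G, ρ)`. -/
def faces {G : SimpleGraph V} (ρ : Equiv.Perm G.Dart) : Set (Set G.Dart) :=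
  Set.range (faceOf ρ)

/-- The dual graph is simple: no dual edge joins a face to itself, and no two distinct
faces are joined by more than one dual edge. -/
def DualSimple {G : SimpleGraph V} (ρ : Equiv.Perm G.Dart) : Prop :=
  (∀ d : G.Dart, faceOf ρ d ≠ faceOf ρ d.symm) ∧
  (∀ d d' : G.Dart, d.edge ≠ d'.edge →
    ¬(faceOf ρ d = faceOf ρ d' ∧ faceOf ρ d.symm = faceOf ρ d'.symm) ∧
    ¬(faceOf ρ d = faceOf ρ d'.symm ∧ faceOf ρ d.symm = faceOf ρ d'))

/-- The dual graph of `(G, ρ)`, as a simple graph on the set of faces: two distinct faces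
are adjacent when some edge of `G` induces a dual edge between them. -/
def dualGraph {G : SimpleGraph V} (ρ : Equiv.Perm G.Dart) : SimpleGraph (faces ρ) where
  Adj F₁ F₂ := F₁ ≠ F₂ ∧
    ∃ d : G.Dart, faceOf ρ d = (F₁ : Set G.Dart) ∧ faceOf ρ d.symm = (F₂ : Set G.Dart)
  symm := by
    constructor
    rintro F₁ F₂ ⟨hne, d, h1, h2⟩
    exact ⟨hne.symm, d.symm, h2, by rwa [SimpleGraph.Dart.symm_symm]⟩
  loopless := by constructor; rintro F ⟨hne, -⟩; exact hne rfl

/-- `C` is a cutface: a face whose removal disconnects the dual graph. -/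
def IsCutface {G : SimpleGraph V} (ρ : Equiv.Perm G.Dart) (C : Set G.Dart) : Prop :=
  C ∈ faces ρ ∧
    ¬((dualGraph ρ).induce {F : faces ρ | (F : Set G.Dart) ≠ C}).Connected

end DualSep

namespace SimpleGraph

open Finset

variable {V : Type*} {G : SimpleGraph V}

lemma ncard_edgeSet_eq_card_edgeFinset [Fintype G.edgeSet] :
    G.edgeSet.ncard = #G.edgeFinset :=
  Set.ncard_eq_toFinset_card' _

lemma card_mul_le_two_mul_ncard_edgeSet [Fintype V] {c : ℕ}
    (hdeg : ∀ v, c ≤ (G.neighborSet v).ncard) : Fintype.card V * c ≤ 2 * G.edgeSet.ncard := by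
  classical
  calc Fintype.card V * c = ∑ _v : V, c := by simp [mul_comm]
    _ ≤ ∑ v : V, G.degree v := sum_le_sum fun v _ => by
        rw [← card_neighborFinset_eq_degree, neighborFinset_def, ← Set.ncard_eq_toFinset_card']
        exact hdeg v
    _ = 2 * G.edgeSet.ncard := by
        rw [sum_degrees_eq_twice_card_edges, ncard_edgeSet_eq_card_edgeFinset]

end SimpleGraph

namespace DualSep

open SimpleGraph Finset

variable {V : Type*} {G : SimpleGraph V} {ρ : Equiv.Perm G.Dart}

lemma facePerm_apply (ρ : Equiv.Perm G.Dart) (d : G.Dart) : facePerm ρ d = ρ d.symm := rfl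

lemma faceOf_eq_faceOf_iff {d d' : G.Dart} : faceOf ρ d' = faceOf ρ d ↔ d' ∈ faceOf ρ d := by
  refine ⟨fun h => h ▸ Equiv.Perm.SameCycle.refl _ _, fun h => ?_⟩
  ext x
  exact ⟨h.trans, h.symm.trans⟩

namespace IsRotationSystem

variable (hρ : IsRotationSystem G ρ)
include hρ

lemma fst_facePerm (d : G.Dart) : (facePerm ρ d).fst = d.snd := by
  rw [facePerm_apply, hρ.fst_fixed, Dart.symm_toProd, Prod.fst_swap]

lemma facePerm_ne_self (d : G.Dart) : facePerm ρ d ≠ d := by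
  intro h
  have hfst := hρ.fst_facePerm d
  rw [h] at hfst
  exact G.ne_of_adj d.adj hfst

lemma apply_ne_self {d : G.Dart} (hdeg : 1 < (G.neighborSet d.fst).ncard) : ρ d ≠ d := by
  intro hfix
  obtain ⟨u, hu, hne⟩ := Set.exists_ne_of_one_lt_ncard hdeg d.snd
  obtain ⟨n, hn⟩ := hρ.single_orbit d ⟨(d.fst, u), hu⟩ rfl
  rw [Equiv.Perm.pow_apply_eq_self_of_apply_eq_self hfix] at hn
  exact hne (congrArg (·.snd) hn).symm

/-- A face `(d, facePerm ρ d)` of length 2 forces `facePerm ρ d = d.symm`, hence `ρ d = d`. -/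
lemma facePerm_facePerm_ne_self {d : G.Dart} (hdeg : 1 < (G.neighborSet d.fst).ncard) :
    facePerm ρ (facePerm ρ d) ≠ d := by
  intro h
  have hsymm : facePerm ρ d = d.symm := by
    refine Dart.ext _ _ (Prod.ext (hρ.fst_facePerm d) ?_)
    simpa [h] using (hρ.fst_facePerm (facePerm ρ d)).symm
  rw [hsymm, facePerm_apply, Dart.symm_symm] at h
  exact hρ.apply_ne_self hdeg h

lemma three_le_ncard_faceOf [Fintype V] {d : G.Dart} (hdeg : 1 < (G.neighborSet d.fst).ncard) :
    3 ≤ (faceOf ρ d).ncard := by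
  classical
  have h₁ := hρ.facePerm_ne_self d
  have h₂ := hρ.facePerm_facePerm_ne_self hdeg
  have h₃ : facePerm ρ (facePerm ρ d) ≠ facePerm ρ d :=
    fun h => h₁ ((facePerm ρ).injective h)
  refine (Set.two_lt_ncard_iff).2 ⟨d, facePerm ρ d, facePerm ρ (facePerm ρ d), ?_, ?_, ?_,
    h₁.symm, h₂.symm, h₃.symm⟩
  · exact Equiv.Perm.SameCycle.refl _ _
  · exact Equiv.Perm.sameCycle_apply_right.2 (Equiv.Perm.SameCycle.refl _ _)
  · exact Equiv.Perm.sameCycle_apply_right.2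
      (Equiv.Perm.sameCycle_apply_right.2 (Equiv.Perm.SameCycle.refl _ _))

lemma three_mul_ncard_faces_le [Fintype V] (hdeg : ∀ v, 1 < (G.neighborSet v).ncard) :
    3 * (faces ρ).ncard ≤ 2 * G.edgeSet.ncard := by
  classical
  have hfaces : faces ρ = ↑(univ.image (faceOf ρ)) := by simp [faces]
  rw [hfaces, Set.ncard_coe_finset, ncard_edgeSet_eq_card_edgeFinset,
    ← dart_card_eq_twice_card_edges, ← card_univ]
  refine mul_card_image_le_card _ 3 fun F hF => ?_
  obtain ⟨d, -, rfl⟩ := mem_image.mp hF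
  have hfiber :
      (({d' | faceOf ρ d' = faceOf ρ d} : Finset G.Dart) : Set G.Dart) = faceOf ρ d := by
    ext d'
    simp [faceOf_eq_faceOf_iff]
  rw [← Set.ncard_coe_finset, hfiber]
  exact hρ.three_le_ncard_faceOf (hdeg d.fst)

end IsRotationSystem

end DualSep

open DualSep in
theorem stmt11_general {V : Type*} [Fintype V] (G : SimpleGraph V)
    (c : ℕ) (hc : 18 ≤ c)
    (hdeg : ∀ v : V, c ≤ (G.neighborSet v).ncard)
    (hcard : c + 2 ≤ Fintype.card V)
    (ρ : Equiv.Perm G.Dart) (hρ : IsRotationSystem G ρ)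
    (g : ℤ)
    (hEuler : (Fintype.card V : ℤ) - (G.edgeSet.ncard : ℤ) + ((faces ρ).ncard : ℤ)
      = 2 - 2 * g) :
    ⌈(((c : ℚ) - 2) * ((c : ℚ) - 3)) / 12⌉ < g := by
  have hvert := G.card_mul_le_two_mul_ncard_edgeSet hdeg
  have hface := hρ.three_mul_ncard_faces_le fun v => by have := hdeg v; omega
  rw [Int.ceil_lt_iff]
  qify at hvert hface hcard hc hEuler
  nlinarith [mul_nonneg (sub_nonneg.mpr hcard) (by linarith : (0 : ℚ) ≤ c - 6)]

open DualSep in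
/-- Plummer–Zha: for `c ≥ 18`, a connected graph with minimum degree at least `c` on more
than `c + 1` vertices has every embedding of genus strictly greater than
`⌈(c-2)(c-3)/12⌉ = γ(K_{c+1})`. -/
theorem stmt11 {V : Type*} [Fintype V] [DecidableEq V] (G : SimpleGraph V)
    (hconn : G.Connected) (c : ℕ) (hc : 18 ≤ c)
    (hdeg : ∀ v : V, c ≤ (G.neighborSet v).ncard)
    (hcard : c + 2 ≤ Fintype.card V)
    (ρ : Equiv.Perm G.Dart) (hρ : IsRotationSystem G ρ)
    (g : ℤ)
    (hEuler : (Fintype.card V : ℤ) - (G.edgeSet.ncard : ℤ) + ((faces ρ).ncard : ℤ)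
      = 2 - 2 * g) :
    ⌈(((c : ℚ) - 2) * ((c : ℚ) - 3)) / 12⌉ < g :=
  stmt11_general G c hc hdeg hcard ρ hρ g hEuler
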